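/- Let y : [0,1] → ℝ be three times differentiable with |y'''(t)| ≤ ξ₁ for all t ∈ [0,1], and for integers j ≥ 0 and 0 ≤ k ≤ 2^j − 1 define the Haar coefficients a_{2^j+k+1} = 2^j ∫₀¹ y''(t) h_{2^j+k+1}(t) dt. Then for every integer J ≥ 0, the truncation error function E_{M1}(t) = Σ_{j=J+1}^∞ Σ_{k=0}^{2^j−1} a_{2^j+k+1} p_{2,2^j+k+1}(t) satisfies the L²([0,1]) bound ‖E_{M1}‖₂ ≤ (ξ₁/6)·(2^{−(J+1)})². -/

import Mathlib

open MeasureTheory Real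

/-- Left endpoint of the support of the Haar wavelet indexed by `(j, k)`. -/
noncomputable def eta1 (j k : ℕ) : ℝ := (k : ℝ) / 2 ^ j

/-- Midpoint of the support of the Haar wavelet indexed by `(j, k)`. -/
noncomputable def eta2 (j k : ℕ) : ℝ := (2 * (k : ℝ) + 1) / 2 ^ (j + 1)

/-- Right endpoint of the support of the Haar wavelet indexed by `(j, k)`. -/
noncomputable def eta3 (j k : ℕ) : ℝ := ((k : ℝ) + 1) / 2 ^ j

/-- The Haar wavelet `h_i` with `i = 2^j + k + 1`: equals `1` on `[η₁, η₂)`,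
`-1` on `[η₂, η₃)` and `0` elsewhere. -/
noncomputable def haarJK (j k : ℕ) (t : ℝ) : ℝ :=
  if eta1 j k ≤ t ∧ t < eta2 j k then 1
  else if eta2 j k ≤ t ∧ t < eta3 j k then -1
  else 0

/-- `p_{2,i}(t) = ∫₀ᵗ (t - s) h_i(s) ds` where `i = 2^j + k + 1`. -/
noncomputable def p2JK (j k : ℕ) (t : ℝ) : ℝ := ∫ s in (0:ℝ)..t, (t - s) * haarJK j k s

/-- The Haar coefficient `2^j ∫₀¹ f(t) h_{2^j+k+1}(t) dt` of a function `f`. -/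
noncomputable def haarCoeff (f : ℝ → ℝ) (j k : ℕ) : ℝ :=
  2 ^ j * ∫ t in (0:ℝ)..1, f t * haarJK j k t

/-- Truncation error of the Haar expansion at resolution `J`:
`Σ_{j=J+1}^∞ Σ_{k=0}^{2^j-1} c_{j,k} p_{2,2^j+k+1}(t)` (here the outer sum is
reindexed by `j = J + 1 + m`). -/
noncomputable def truncErr (c : ℕ → ℕ → ℝ) (J : ℕ) (t : ℝ) : ℝ :=
  ∑' m : ℕ, ∑ k ∈ Finset.range (2 ^ (J + 1 + m)), c (J + 1 + m) k * p2JK (J + 1 + m) k t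

/-- The `L²([0,1])` norm of a function. -/
noncomputable def L2norm (f : ℝ → ℝ) : ℝ := Real.sqrt (∫ t in (0:ℝ)..1, f t ^ 2)


/-! Each Haar coefficient of `y''` is `2^j` times the second difference
`∫_{η₁}^{η₂} y'' - ∫_{η₂}^{η₃} y''`, hence at most `ξ₁ / (4 · 2^j)` by the mean value theorem,
while `|p_{2,i}| ≤ 4^{-j} / 2`. The `2^j` terms of level `j` thus contribute at most
`ξ₁ 4^{-j} / 8`, and the geometric tail over `j > J` gives the uniform bound
`ξ₁ / 6 · 4^{-(J+1)}`, which dominates the `L²` norm on `[0,1]`. -/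

open Set

lemma eta2_eq_eta1_add (j k : ℕ) : eta2 j k = eta1 j k + 1 / 2 ^ (j + 1) := by
  simp only [eta1, eta2, pow_succ]; field_simp

lemma eta3_eq_eta2_add (j k : ℕ) : eta3 j k = eta2 j k + 1 / 2 ^ (j + 1) := by
  simp only [eta2, eta3, pow_succ]; field_simp; ring

lemma eta1_nonneg (j k : ℕ) : 0 ≤ eta1 j k := by unfold eta1; positivity

lemma eta3_le_one {j k : ℕ} (hk : k < 2 ^ j) : eta3 j k ≤ 1 := by
  rw [eta3, div_le_one (by positivity)]
  exact_mod_cast hk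

lemma eta1_lt_eta2 (j k : ℕ) : eta1 j k < eta2 j k := by
  rw [eta2_eq_eta1_add]; exact lt_add_of_pos_right _ (by positivity)

lemma eta2_lt_eta3 (j k : ℕ) : eta2 j k < eta3 j k := by
  rw [eta3_eq_eta2_add]; exact lt_add_of_pos_right _ (by positivity)

lemma haarJK_of_lt_eta1 {j k : ℕ} {s : ℝ} (hs : s < eta1 j k) : haarJK j k s = 0 := by
  simp [haarJK, hs.not_ge, (hs.trans (eta1_lt_eta2 j k)).not_ge]

lemma haarJK_of_eta3_le {j k : ℕ} {s : ℝ} (hs : eta3 j k ≤ s) : haarJK j k s = 0 := by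
  simp [haarJK, ((eta2_lt_eta3 j k).le.trans hs).not_gt, hs.not_gt]

lemma haarJK_of_mem_Ico_eta1_eta2 {j k : ℕ} {s : ℝ} (hs : s ∈ Ico (eta1 j k) (eta2 j k)) :
    haarJK j k s = 1 := by
  simp [haarJK, hs.1, hs.2]

lemma haarJK_of_mem_Ico_eta2_eta3 {j k : ℕ} {s : ℝ} (hs : s ∈ Ico (eta2 j k) (eta3 j k)) :
    haarJK j k s = -1 := by
  simp [haarJK, hs.1, hs.2, hs.1.not_gt]

lemma abs_haarJK_le_one (j k : ℕ) (s : ℝ) : |haarJK j k s| ≤ 1 := by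
  unfold haarJK; split_ifs <;> norm_num

lemma measurable_haarJK (j k : ℕ) : Measurable (haarJK j k) := by
  unfold haarJK
  exact Measurable.ite (measurableSet_Ici.inter measurableSet_Iio) measurable_const
    (Measurable.ite (measurableSet_Ici.inter measurableSet_Iio) measurable_const measurable_const)

lemma IntervalIntegrable.mul_haarJK {f : ℝ → ℝ} {u v : ℝ} (hf : IntervalIntegrable f volume u v)
    (j k : ℕ) : IntervalIntegrable (fun s => f s * haarJK j k s) volume u v := by
  have hbdd : ∀ s, ‖haarJK j k s‖ ≤ 1 := abs_haarJK_le_one j k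
  exact ⟨hf.1.mul_bdd (measurable_haarJK j k).aestronglyMeasurable (ae_of_all _ hbdd),
    hf.2.mul_bdd (measurable_haarJK j k).aestronglyMeasurable (ae_of_all _ hbdd)⟩

lemma integral_mul_haarJK_eq_zero_of_le_eta1 {f : ℝ → ℝ} {j k : ℕ} {u v : ℝ}
    (hu : u ≤ eta1 j k) (hv : v ≤ eta1 j k) : ∫ s in u..v, f s * haarJK j k s = 0 := by
  refine intervalIntegral.integral_zero_ae ?_
  filter_upwards [volume.ae_ne (eta1 j k)] with s hne hs
  have hle : s ≤ eta1 j k := hs.2.trans (max_le hu hv)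
  rw [haarJK_of_lt_eta1 (lt_of_le_of_ne hle hne), mul_zero]

lemma integral_mul_haarJK_eq_zero_of_eta3_le {f : ℝ → ℝ} {j k : ℕ} {u v : ℝ}
    (hu : eta3 j k ≤ u) (hv : eta3 j k ≤ v) : ∫ s in u..v, f s * haarJK j k s = 0 := by
  refine intervalIntegral.integral_zero_ae (ae_of_all _ fun s hs => ?_)
  rw [haarJK_of_eta3_le ((le_min hu hv).trans hs.1.le), mul_zero]

lemma integral_mul_haarJK {f : ℝ → ℝ} (hf : Continuous f) {j k : ℕ} {u v : ℝ}
    (hu : u ≤ eta1 j k) (hv : eta3 j k ≤ v) :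
    ∫ s in u..v, f s * haarJK j k s =
      (∫ s in eta1 j k..eta2 j k, f s) - ∫ s in eta2 j k..eta3 j k, f s := by
  have hi : ∀ u v, IntervalIntegrable (fun s => f s * haarJK j k s) volume u v :=
    fun u v => (hf.intervalIntegrable u v).mul_haarJK j k
  have h_left :
      ∫ s in eta1 j k..eta2 j k, f s * haarJK j k s = ∫ s in eta1 j k..eta2 j k, f s := by
    refine intervalIntegral.integral_congr_ae ?_
    filter_upwards [volume.ae_ne (eta2 j k)] with s hne hs
    rw [uIoc_of_le (eta1_lt_eta2 j k).le] at hs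
    rw [haarJK_of_mem_Ico_eta1_eta2 ⟨hs.1.le, lt_of_le_of_ne hs.2 hne⟩, mul_one]
  have h_right : ∫ s in eta2 j k..eta3 j k, f s * haarJK j k s =
      -∫ s in eta2 j k..eta3 j k, f s := by
    rw [← intervalIntegral.integral_neg]
    refine intervalIntegral.integral_congr_ae ?_
    filter_upwards [volume.ae_ne (eta3 j k)] with s hne hs
    rw [uIoc_of_le (eta2_lt_eta3 j k).le] at hs
    rw [haarJK_of_mem_Ico_eta2_eta3 ⟨hs.1.le, lt_of_le_of_ne hs.2 hne⟩, mul_neg_one]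
  rw [← intervalIntegral.integral_add_adjacent_intervals (hi u _) (hi (eta1 j k) v),
    ← intervalIntegral.integral_add_adjacent_intervals (hi _ (eta2 j k)) (hi _ v),
    ← intervalIntegral.integral_add_adjacent_intervals (hi _ (eta3 j k)) (hi _ v),
    integral_mul_haarJK_eq_zero_of_le_eta1 hu le_rfl,
    integral_mul_haarJK_eq_zero_of_eta3_le le_rfl hv, h_left, h_right]
  ring

lemma integral_const_sub_id (t u v : ℝ) :
    ∫ s in u..v, (t - s) = ((t - u) ^ 2 - (t - v) ^ 2) / 2 := by
  simp only [intervalIntegral.integral_comp_sub_left (fun s => s), integral_id]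

lemma p2JK_of_eta3_le {j k : ℕ} {t : ℝ} (ht : eta3 j k ≤ t) :
    p2JK j k t = (1 / 2 ^ (j + 1)) ^ 2 := by
  rw [p2JK, integral_mul_haarJK (f := fun s => t - s) (by fun_prop) (eta1_nonneg j k) ht,
    integral_const_sub_id, integral_const_sub_id, eta3_eq_eta2_add, eta2_eq_eta1_add]
  ring

lemma abs_p2JK_le (j k : ℕ) (t : ℝ) : |p2JK j k t| ≤ (1 / 2 ^ j) ^ 2 / 2 := by
  set a := eta1 j k
  set δ : ℝ := 1 / 2 ^ (j + 1)
  have hL : (1:ℝ) / 2 ^ j = 2 * δ := by simp only [δ, pow_succ]; field_simp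
  have ha : 0 ≤ a := eta1_nonneg j k
  rw [hL]
  rcases le_total t a with hta | hat
  · rw [p2JK, integral_mul_haarJK_eq_zero_of_le_eta1 ha hta, abs_zero]
    positivity
  rcases le_total t (eta3 j k) with htc | hct
  · have hi : ∀ u v, IntervalIntegrable (fun s => (t - s) * haarJK j k s) volume u v :=
      fun u v => ((continuous_const.sub continuous_id).intervalIntegrable u v).mul_haarJK j k
    have hsplit : p2JK j k t = ∫ s in a..t, (t - s) * haarJK j k s := by
      rw [p2JK, ← intervalIntegral.integral_add_adjacent_intervals (hi 0 a) (hi a t),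
        integral_mul_haarJK_eq_zero_of_le_eta1 ha le_rfl, zero_add]
    have hpt : ∀ s ∈ Ioc a t, ‖(t - s) * haarJK j k s‖ ≤ t - s := fun s hs => by
      rw [norm_mul, Real.norm_eq_abs, abs_of_nonneg (sub_nonneg.2 hs.2)]
      exact mul_le_of_le_one_right (sub_nonneg.2 hs.2) (abs_haarJK_le_one j k s)
    calc |p2JK j k t| ≤ ∫ s in a..t, (t - s) := by
          rw [hsplit]
          exact intervalIntegral.norm_integral_le_of_norm_le hat (ae_of_all _ hpt)
            ((continuous_const.sub continuous_id).intervalIntegrable _ _)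
      _ = (t - a) ^ 2 / 2 := by rw [integral_const_sub_id]; ring
      _ ≤ (2 * δ) ^ 2 / 2 := by
          have hc : eta3 j k = a + 2 * δ := by rw [eta3_eq_eta2_add, eta2_eq_eta1_add]; ring
          gcongr; linarith
  · rw [p2JK_of_eta3_le hct, abs_of_nonneg (by positivity)]
    nlinarith

lemma abs_integral_sub_integral_add_le {f : ℝ → ℝ} {a δ ξ : ℝ} (hδ : 0 ≤ δ)
    (hf : Differentiable ℝ f) (hb : ∀ x ∈ Icc a (a + 2 * δ), |deriv f x| ≤ ξ) :
    |(∫ s in a..a + δ, f s) - ∫ s in a + δ..a + 2 * δ, f s| ≤ ξ * δ ^ 2 := by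
  have hshift : ∫ s in a + δ..a + 2 * δ, f s = ∫ s in a..a + δ, f (s + δ) := by
    rw [intervalIntegral.integral_comp_add_right]; ring_nf
  have hdiff : ∀ s ∈ uIoc a (a + δ), ‖f s - f (s + δ)‖ ≤ ξ * δ := fun s hs => by
    rw [uIoc_of_le (by linarith)] at hs
    have := (convex_Icc a (a + 2 * δ)).norm_image_sub_le_of_norm_deriv_le
      (fun x _ => hf x) (fun x hx => by simpa using hb x hx)
      (⟨by linarith [hs.1], by linarith [hs.2]⟩ : s + δ ∈ Icc a (a + 2 * δ))
      (⟨hs.1.le, by linarith [hs.2]⟩ : s ∈ Icc a (a + 2 * δ))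
    rwa [show s - (s + δ) = -δ by ring, norm_neg, Real.norm_of_nonneg hδ] at this
  have hcont := hf.continuous
  rw [hshift, ← intervalIntegral.integral_sub (hcont.intervalIntegrable _ _)
    ((show Continuous fun s => f (s + δ) by fun_prop).intervalIntegrable _ _)]
  calc _ ≤ ξ * δ * |a + δ - a| := intervalIntegral.norm_integral_le_of_norm_le_const hdiff
    _ = ξ * δ ^ 2 := by rw [add_sub_cancel_left, abs_of_nonneg hδ]; ring

lemma abs_haarCoeff_le {f : ℝ → ℝ} {ξ : ℝ} (hf : Differentiable ℝ f)
    (hb : ∀ t ∈ Icc (0:ℝ) 1, |deriv f t| ≤ ξ) {j k : ℕ} (hk : k < 2 ^ j) :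
    |haarCoeff f j k| ≤ ξ / 4 / 2 ^ j := by
  set a := eta1 j k
  set δ : ℝ := 1 / 2 ^ (j + 1)
  have hb2 : eta2 j k = a + δ := eta2_eq_eta1_add j k
  have hc : eta3 j k = a + 2 * δ := by rw [eta3_eq_eta2_add, hb2]; ring
  have hsub : Icc a (a + 2 * δ) ⊆ Icc 0 1 :=
    Icc_subset_Icc (eta1_nonneg j k) (hc ▸ eta3_le_one hk)
  have hdiff := abs_integral_sub_integral_add_le (by positivity) hf fun x hx => hb x (hsub hx)
  rw [haarCoeff, integral_mul_haarJK hf.continuous (eta1_nonneg j k) (eta3_le_one hk), hb2, hc,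
    abs_mul, abs_of_pos (by positivity)]
  calc 2 ^ j * |(∫ s in a..a + δ, f s) - ∫ s in a + δ..a + 2 * δ, f s|
      ≤ 2 ^ j * (ξ * δ ^ 2) := by gcongr
    _ = ξ / 4 / 2 ^ j := by simp only [δ, pow_succ]; field_simp; ring

lemma abs_sum_mul_p2JK_le {c : ℕ → ℝ} {C : ℝ} {j : ℕ}
    (hc : ∀ k < 2 ^ j, |c k| ≤ C / 2 ^ j) (t : ℝ) :
    |∑ k ∈ Finset.range (2 ^ j), c k * p2JK j k t| ≤ C / 2 * (1 / 2 ^ j) ^ 2 := by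
  have hC : 0 ≤ C / 2 ^ j := (abs_nonneg _).trans (hc 0 (by positivity))
  calc |∑ k ∈ Finset.range (2 ^ j), c k * p2JK j k t|
      ≤ ∑ k ∈ Finset.range (2 ^ j), |c k * p2JK j k t| := Finset.abs_sum_le_sum_abs _ _
    _ ≤ ∑ _k ∈ Finset.range (2 ^ j), C / 2 ^ j * ((1 / 2 ^ j) ^ 2 / 2) := by
      refine Finset.sum_le_sum fun k hk => ?_
      rw [abs_mul]
      exact mul_le_mul (hc k (Finset.mem_range.1 hk)) (abs_p2JK_le j k t) (abs_nonneg _) hC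
    _ = C / 2 * (1 / 2 ^ j) ^ 2 := by
      rw [Finset.sum_const, Finset.card_range, nsmul_eq_mul]; push_cast; field_simp

lemma abs_truncErr_le {c : ℕ → ℕ → ℝ} {C : ℝ} (hc : ∀ j k, k < 2 ^ j → |c j k| ≤ C / 2 ^ j)
    (J : ℕ) (t : ℝ) : |truncErr c J t| ≤ 2 * C / 3 * (1 / 2 ^ (J + 1)) ^ 2 := by
  set B := C / 2 * (1 / 2 ^ (J + 1)) ^ 2
  have hlevel : ∀ m : ℕ, ‖∑ k ∈ Finset.range (2 ^ (J + 1 + m)),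
      c (J + 1 + m) k * p2JK (J + 1 + m) k t‖ ≤ B * (1 / 4) ^ m := fun m => by
    refine (abs_sum_mul_p2JK_le (hc (J + 1 + m)) t).trans_eq ?_
    have h4 : (4:ℝ) ^ m = (2 ^ m) ^ 2 := by rw [← pow_mul, mul_comm, pow_mul]; norm_num
    simp only [B, pow_add, one_div_pow (4:ℝ), h4]; field_simp
  have hgeom : HasSum (fun m : ℕ => B * (1 / 4) ^ m) (B * (1 - 1 / 4)⁻¹) :=
    (hasSum_geometric_of_lt_one (by norm_num) (by norm_num)).mul_left B
  calc |truncErr c J t| ≤ B * (1 - 1 / 4)⁻¹ := tsum_of_norm_bounded hgeom hlevel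
    _ = 2 * C / 3 * (1 / 2 ^ (J + 1)) ^ 2 := by simp only [B]; ring

lemma L2norm_le_of_forall_abs_le {f : ℝ → ℝ} {R : ℝ} (h : ∀ t ∈ Icc (0:ℝ) 1, |f t| ≤ R) :
    L2norm f ≤ R := by
  have hR : 0 ≤ R := (abs_nonneg _).trans (h 0 (left_mem_Icc.2 zero_le_one))
  have hsq : ∀ t ∈ uIoc (0:ℝ) 1, ‖f t ^ 2‖ ≤ R ^ 2 := fun t ht => by
    rw [uIoc_of_le zero_le_one] at ht
    rw [norm_pow, Real.norm_eq_abs]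
    exact pow_le_pow_left₀ (abs_nonneg _) (h t (Ioc_subset_Icc_self ht)) 2
  have hint := intervalIntegral.norm_integral_le_of_norm_le_const hsq
  rw [sub_zero, abs_one, mul_one, Real.norm_eq_abs] at hint
  exact Real.sqrt_le_iff.2 ⟨hR, (le_abs_self _).trans hint⟩

theorem truncation_error_bound_ivp_general (y : ℝ → ℝ) (ξ₁ : ℝ)
    (hy'' : Differentiable ℝ (deriv (deriv y)))
    (hb : ∀ t ∈ Set.Icc (0:ℝ) 1, |deriv (deriv (deriv y)) t| ≤ ξ₁)
    (J : ℕ) :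
    L2norm (truncErr (haarCoeff (deriv (deriv y))) J) ≤
      ξ₁ / 6 * (1 / 2 ^ (J + 1)) ^ 2 := by
  have hcoeff : ∀ j k, k < 2 ^ j → |haarCoeff (deriv (deriv y)) j k| ≤ ξ₁ / 4 / 2 ^ j :=
    fun _ _ hk => abs_haarCoeff_le hy'' hb hk
  refine L2norm_le_of_forall_abs_le fun t _ => (abs_truncErr_le hcoeff J t).trans_eq ?_
  ring

/-- the `L²` bound `‖E_{M1}‖₂ ≤ (ξ₁/6)·(2^{-(J+1)})²` on the
truncation error of the Haar expansion of `y''`, for `|y'''| ≤ ξ₁`. -/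
theorem truncation_error_bound_ivp (y : ℝ → ℝ) (ξ₁ : ℝ)
    (hy : Differentiable ℝ y) (hy' : Differentiable ℝ (deriv y))
    (hy'' : Differentiable ℝ (deriv (deriv y)))
    (hb : ∀ t ∈ Set.Icc (0:ℝ) 1, |deriv (deriv (deriv y)) t| ≤ ξ₁)
    (J : ℕ) :
    L2norm (truncErr (haarCoeff (deriv (deriv y))) J) ≤
      ξ₁ / 6 * (1 / 2 ^ (J + 1)) ^ 2 :=
  truncation_error_bound_ivp_general y ξ₁ hy'' hb J
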